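/- arXiv:2204.08141 — 5 statements merged into one kernel-verified Lean document; each statement's English description precedes it below -/
import Mathlib

section
/- For the n×n matrix C_A (Cartan matrix of Λ(n-1,1,1)), the matrix C_A^{-1} + C_A^{-t} is the symmetric tridiagonal matrix with diagonal entries (2,2,...,2,1) and off-diagonal entries -1, i.e., the matrix of the bilinear form of the root system of type BC_n in the basis of simple roots α_1,...,α_{n-1},α_n (with respect to the standard inner product, where α_i = ε_i-ε_{i+1} and α_n = ε_n). -/
open Matrix

/-- The Cartan matrix of Λ(n-1,1,1) (0-indexed). -/
def CartanLambda (n : ℕ) : Matrix (Fin n) (Fin n) ℚ :=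
  fun i j => if i.val < n - 1 then (if j ≤ i then 1 else 0) else 2

/-- The symmetric tridiagonal matrix with diagonal (2,…,2,1) and off-diagonal -1. -/
def GramBC (n : ℕ) : Matrix (Fin n) (Fin n) ℚ :=
  fun i j =>
    if i = j then (if i.val = n - 1 then 1 else 2)
    else if i.val = j.val + 1 ∨ j.val = i.val + 1 then -1 else 0

/-- The standard basis vector ε_i of ℝ^n. -/
noncomputable def eps {n : ℕ} (i : Fin n) : Fin n → ℝ := Pi.single i 1

/-- The simple roots of type BC_n: α_i = ε_i - ε_{i+1} (i < n), α_n = ε_n. -/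
noncomputable def simpleRootBC {n : ℕ} (i : Fin n) : Fin n → ℝ :=
  if h : i.val + 1 < n then eps i - eps ⟨i.val + 1, h⟩ else eps i

/-- The explicit inverse of `CartanLambda n`. -/
def InvLambda (n : ℕ) : Matrix (Fin n) (Fin n) ℚ :=
  fun j k => if j = k then (if (k : ℕ) = n - 1 then 1/2 else 1)
    else if (j : ℕ) = (k : ℕ) + 1 then -1 else 0

lemma right_inv_aux (n : ℕ) (hn : 2 ≤ n) : CartanLambda n * InvLambda n = 1 := by
  ext i k
  rw [Matrix.mul_apply, Matrix.one_apply]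
  have hsplit : ∀ j : Fin n, InvLambda n j k =
      (if j = k then (if (k : ℕ) = n - 1 then (1/2 : ℚ) else 1) else 0) +
      (if (j : ℕ) = (k : ℕ) + 1 then -1 else 0) := by
    intro j
    unfold InvLambda
    split_ifs with h1 h2 <;> simp_all
  have h2 : (∑ j : Fin n, CartanLambda n i j * (if (j : ℕ) = (k : ℕ) + 1 then (-1 : ℚ) else 0))
      = if h : (k : ℕ) + 1 < n then -CartanLambda n i ⟨(k : ℕ) + 1, h⟩ else 0 := by
    split_ifs with h
    · have : ∀ j : Fin n, ((j : ℕ) = (k : ℕ) + 1) ↔ j = ⟨(k : ℕ) + 1, h⟩ := by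
        intro j; simp [Fin.ext_iff]
      simp only [this, mul_ite, mul_zero, mul_neg, mul_one]
      rw [Finset.sum_ite_eq' Finset.univ]
      simp
    · apply Finset.sum_eq_zero
      intro j _
      have : ¬ ((j : ℕ) = (k : ℕ) + 1) := by omega
      simp [this]
  simp only [hsplit, mul_add, Finset.sum_add_distrib]
  rw [h2]
  simp only [mul_ite, mul_zero]
  rw [Finset.sum_ite_eq' Finset.univ k]
  unfold CartanLambda
  simp only [Finset.mem_univ, if_true, Fin.le_def, Fin.ext_iff]
  split_ifs <;> norm_num <;> omega

lemma heps_aux {n : ℕ} (a b : Fin n) :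
    ∑ k : Fin n, eps a k * eps b k = if a = b then (1 : ℝ) else 0 := by
  simp [eps, Pi.single_apply, ite_mul, Finset.sum_ite_eq, eq_comm]

/-- C_A⁻¹ + C_A⁻ᵗ is the symmetric tridiagonal matrix with diagonal
(2,…,2,1) and off-diagonal entries -1, which is the Gram matrix of the simple
roots of type BC_n for the standard inner product. -/
theorem stmt_4 (n : ℕ) (hn : 2 ≤ n) :
    (CartanLambda n)⁻¹ + ((CartanLambda n)⁻¹)ᵀ = GramBC n ∧
    (∀ i j : Fin n, ((GramBC n i j : ℚ) : ℝ) =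
        ∑ k : Fin n, simpleRootBC i k * simpleRootBC j k) := by
  constructor
  · have hinv : (CartanLambda n)⁻¹ = InvLambda n :=
      Matrix.inv_eq_right_inv (right_inv_aux n hn)
    rw [hinv]
    ext i j
    simp only [Matrix.add_apply, Matrix.transpose_apply]
    unfold InvLambda GramBC
    simp only [Fin.ext_iff, eq_comm]
    split_ifs <;> norm_num <;> omega
  · intro i j
    unfold simpleRootBC
    by_cases hi : (i : ℕ) + 1 < n <;> by_cases hj : (j : ℕ) + 1 < n <;>
      simp only [hi, hj, dif_pos, dif_neg, dite_true, dite_false, Pi.sub_apply, sub_mul,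
        mul_sub, Finset.sum_sub_distrib, heps_aux] <;>
      simp only [GramBC, Fin.ext_iff, apply_ite (fun q : ℚ => (q : ℝ))] <;>
      push_cast <;>
      split_ifs <;> norm_num <;> omega
end

section
/- Let D be the set of vectors in ℤ^n equal to a dimension vector of an indecomposable representation from the list {e_i + ... + e_{j-1} : 1≤i<j≤n} ∪ {e_i + ... + e_n : 1≤i≤n} ∪ {(e_i+...+e_n) + (e_j+...+e_n) : 1≤i,j≤n}, where e_k is the k-th standard basis vector. Then the linear map ℤ^n → ℝ^n sending e_i ↦ ε_i - ε_{i+1} (i<n) and e_n ↦ ε_n restricts to a bijection from D onto the set of positive roots Φ⁺_BC of type BC_n. -/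
/-- The standard basis vector e_i of ℤ^n. -/
def e {n : ℕ} (i : Fin n) : Fin n → ℤ := Pi.single i 1

/-- The set of positive roots of type BC_n. -/
def PhiPlusBC (n : ℕ) : Set (Fin n → ℝ) :=
  {v | ∃ i j : Fin n, i < j ∧ (v = eps i + eps j ∨ v = eps i - eps j)} ∪
  {v | ∃ i : Fin n, v = eps i} ∪
  {v | ∃ i : Fin n, v = (2 : ℝ) • eps i}

/-- The set of dimension vectors of the indecomposable Λ(n-1,1,1)-modules:
e_i+…+e_{j-1} (i<j), e_i+…+e_n, and (e_i+…+e_n)+(e_j+…+e_n). -/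
def DimVectors (n : ℕ) : Set (Fin n → ℤ) :=
  {v | ∃ i j : Fin n, i < j ∧ v = ∑ k ∈ Finset.Ico i j, e k} ∪
  {v | ∃ i : Fin n, v = ∑ k ∈ Finset.Ici i, e k} ∪
  {v | ∃ i j : Fin n,
      v = (∑ k ∈ Finset.Ici i, e k) + ∑ k ∈ Finset.Ici j, e k}

/-- The linear map ℤ^n → ℝ^n sending e_i ↦ ε_i - ε_{i+1} (i < n), e_n ↦ ε_n. -/
noncomputable def toRoot {n : ℕ} (v : Fin n → ℤ) : Fin n → ℝ :=
  ∑ i : Fin n, (v i : ℝ) •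
    (if h : i.val + 1 < n then eps i - eps ⟨i.val + 1, h⟩ else eps i)

lemma eps_apply {n : ℕ} (i j : Fin n) : eps i j = if j = i then 1 else 0 := by
  simp [eps, Pi.single_apply]

lemma toRoot_apply {n : ℕ} (v : Fin n → ℤ) (j : Fin n) :
    toRoot v j = (v j : ℝ) -
      (if h : 0 < j.val then (v ⟨j.val - 1, by omega⟩ : ℝ) else 0) := by
  have : toRoot v j = ∑ i : Fin n, ((v i : ℝ) * (if j = i then 1 else 0)
      - (v i : ℝ) * (if h : i.val + 1 < n then (if j = ⟨i.val+1,h⟩ then 1 else 0) else 0)) := by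
    unfold toRoot
    rw [Finset.sum_apply]
    congr 1; funext i
    by_cases h : i.val + 1 < n <;>
      simp [h, eps_apply, mul_sub]
  rw [this, Finset.sum_sub_distrib]
  congr 1
  · rw [Finset.sum_eq_single j] <;> simp +contextual [eq_comm]
  · by_cases hj : 0 < j.val
    · rw [Finset.sum_eq_single (⟨j.val - 1, by omega⟩ : Fin n)]
      · have h1 : (⟨j.val-1, by omega⟩ : Fin n).val + 1 < n := by simp; omega
        rw [dif_pos h1, if_pos (by ext; simp; omega), dif_pos hj, mul_one]
      · intro b _ hb
        by_cases h : b.val + 1 < n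
        · rw [dif_pos h, if_neg, mul_zero]
          intro he
          apply hb; ext
          have := congrArg Fin.val he
          simp at this ⊢; omega
        · simp [h]
      · simp
    · rw [dif_neg hj]
      apply Finset.sum_eq_zero
      intro b _
      by_cases h : b.val + 1 < n
      · rw [dif_pos h, if_neg, mul_zero]
        intro he; have := congrArg Fin.val he; simp at this; omega
      · simp [h]

lemma sumIco_apply {n : ℕ} (i j m : Fin n) :
    (∑ k ∈ Finset.Ico i j, e k) m = if i ≤ m ∧ m < j then 1 else 0 := by
  rw [Finset.sum_apply]
  simp only [e, Pi.single_apply]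
  rw [Finset.sum_ite_eq (Finset.Ico i j) m (fun _ => (1:ℤ))]
  simp [Finset.mem_Ico]

lemma sumIci_apply {n : ℕ} (i m : Fin n) :
    (∑ k ∈ Finset.Ici i, e k) m = if i ≤ m then 1 else 0 := by
  rw [Finset.sum_apply]
  simp only [e, Pi.single_apply]
  rw [Finset.sum_ite_eq (Finset.Ici i) m (fun _ => (1:ℤ))]
  simp [Finset.mem_Ici]

lemma toRoot_W {n : ℕ} {i j : Fin n} (hij : i < j) :
    toRoot (∑ k ∈ Finset.Ico i j, e k) = eps i - eps j := by
  funext m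
  rw [Pi.sub_apply, toRoot_apply, sumIco_apply, eps_apply, eps_apply]
  have hij' : i.val < j.val := hij
  by_cases hm : 0 < m.val
  · rw [dif_pos hm, sumIco_apply]
    simp only [Fin.le_def, Fin.lt_def, Fin.ext_iff]
    split_ifs <;> simp_all <;> omega
  · rw [dif_neg hm]
    simp only [Fin.le_def, Fin.lt_def, Fin.ext_iff]
    split_ifs <;> simp_all <;> omega

lemma toRoot_V {n : ℕ} (i : Fin n) :
    toRoot (∑ k ∈ Finset.Ici i, e k) = eps i := by
  funext m
  rw [toRoot_apply, sumIci_apply, eps_apply]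
  by_cases hm : 0 < m.val
  · rw [dif_pos hm, sumIci_apply]
    simp only [Fin.le_def, Fin.ext_iff]
    split_ifs <;> simp_all <;> omega
  · rw [dif_neg hm]
    simp only [Fin.le_def, Fin.ext_iff]
    split_ifs <;> simp_all <;> omega

lemma toRoot_add {n : ℕ} (v w : Fin n → ℤ) :
    toRoot (v + w) = toRoot v + toRoot w := by
  funext m
  rw [Pi.add_apply, toRoot_apply, toRoot_apply, toRoot_apply]
  by_cases hm : 0 < m.val <;> simp [hm] <;> push_cast <;> ring

lemma toRoot_injective {n : ℕ} : Function.Injective (toRoot (n := n)) := by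
  intro v w h
  funext m
  obtain ⟨mv, hmv⟩ := m
  induction mv using Nat.strong_induction_on with
  | _ mv ih =>
    have h1 := congrFun h ⟨mv, hmv⟩
    rw [toRoot_apply, toRoot_apply] at h1
    by_cases hm : 0 < (⟨mv, hmv⟩ : Fin n).val
    · rw [dif_pos hm, dif_pos hm] at h1
      have hlt : mv - 1 < n := Nat.lt_of_le_of_lt (Nat.sub_le mv 1) hmv
      have h2 : v ⟨mv - 1, hlt⟩ = w ⟨mv - 1, hlt⟩ := ih (mv - 1) (by simp at hm; omega) hlt
      rw [h2] at h1
      have : (v ⟨mv, hmv⟩ : ℝ) = (w ⟨mv, hmv⟩ : ℝ) := by linarith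
      exact_mod_cast this
    · rw [dif_neg hm, dif_neg hm] at h1
      have : (v ⟨mv, hmv⟩ : ℝ) = (w ⟨mv, hmv⟩ : ℝ) := by linarith
      exact_mod_cast this

/-- the map e_i ↦ ε_i-ε_{i+1}, e_n ↦ ε_n restricts to a bijection
from the set of dimension vectors of indecomposables onto Φ⁺_BC. -/
theorem stmt_5 (n : ℕ) :
    Set.BijOn toRoot (DimVectors n) (PhiPlusBC n) := by
  refine ⟨?_, toRoot_injective.injOn, ?_⟩
  · rintro v ((⟨i, j, hij, rfl⟩ | ⟨i, rfl⟩) | ⟨i, j, rfl⟩)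
    · exact Or.inl (Or.inl ⟨i, j, hij, Or.inr (toRoot_W hij)⟩)
    · exact Or.inl (Or.inr ⟨i, toRoot_V i⟩)
    · rw [toRoot_add, toRoot_V, toRoot_V]
      rcases lt_trichotomy i j with h | h | h
      · exact Or.inl (Or.inl ⟨i, j, h, Or.inl rfl⟩)
      · subst h
        exact Or.inr ⟨i, by rw [two_smul]⟩
      · exact Or.inl (Or.inl ⟨j, i, h, Or.inl (add_comm _ _)⟩)
  · rintro u ((⟨i, j, hij, rfl | rfl⟩ | ⟨i, rfl⟩) | ⟨i, rfl⟩)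
    · exact ⟨_, Or.inr ⟨i, j, rfl⟩, by rw [toRoot_add, toRoot_V, toRoot_V]⟩
    · exact ⟨_, Or.inl (Or.inl ⟨i, j, hij, rfl⟩), toRoot_W hij⟩
    · exact ⟨_, Or.inl (Or.inr ⟨i, rfl⟩), toRoot_V i⟩
    · exact ⟨_, Or.inr ⟨i, i, rfl⟩, by rw [toRoot_add, toRoot_V, two_smul]⟩
end

section
/- Define a bracket on the free ℤ[1/2]-module with basis {U_{i,j} : 1≤i,j≤n} ∪ {V_i : 1≤i≤n} ∪ {W_{i,j} : 1≤i≤j≤n-1} by: [W_{i,j},W_{l,m}] = δ_{j+1,l}W_{i,m} − δ_{m+1,i}W_{l,j}; [W_{i,j},V_l] = δ_{j+1,l}V_i; [W_{i,j},U_{l,m}] = δ_{j+1,m}U_{l,i} + δ_{j+1,l}U_{i,m}; [V_i,V_j] = U_{j,i} − U_{i,j}; all other brackets of basis elements (and the corresponding antisymmetric counterparts) zero. Then this bracket satisfies the Jacobi identity, making L(A)⊗ℤ[1/2] a Lie algebra. -/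
/-!
The bracket is the bilinear extension of the structure constants `cst`, so antisymmetry and the
Jacobi identity only need to be checked on basis vectors. Antisymmetry is built into the shape of
`cst`; the Jacobi identity on three basis vectors becomes, after splitting on the Kronecker deltas,
a cancellation of formal sums.
-/

/-- Index set of the isomorphism classes of indecomposable Λ(n-1,1,1)-modules:
`Sum.inl (i,j)` is U_{i,j} (1≤i,j≤n), `Sum.inr (Sum.inl i)` is V_i, and
`Sum.inr (Sum.inr ⟨(i,j),_⟩)` is W_{i,j} (1≤i≤j≤n-1), all 0-indexed. -/
abbrev LIdx (n : ℕ) :=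
  (Fin n × Fin n) ⊕ (Fin n ⊕ {p : Fin n × Fin n // p.1 ≤ p.2 ∧ p.2.val + 1 < n})

/-- Structure constants of Riedtmann's Lie algebra of Λ(n-1,1,1)
(Proposition 4.2 of the paper). -/
noncomputable def cst {n : ℕ} (R : Type) [CommRing R] :
    LIdx n → LIdx n → (LIdx n →₀ R)
  | .inr (.inr p), .inr (.inr q) =>
      (if h : p.1.2.val + 1 = q.1.1.val then
        Finsupp.single (.inr (.inr ⟨(p.1.1, q.1.2), by
          obtain ⟨h1, _⟩ := p.2; obtain ⟨h2, h3⟩ := q.2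
          refine ⟨?_, h3⟩
          change p.1.1 ≤ q.1.2
          rw [Fin.le_def] at h1 h2 ⊢
          omega⟩)) (1 : R)
      else 0)
      - (if h : q.1.2.val + 1 = p.1.1.val then
        Finsupp.single (.inr (.inr ⟨(q.1.1, p.1.2), by
          obtain ⟨h1, h4⟩ := p.2; obtain ⟨h2, _⟩ := q.2
          refine ⟨?_, h4⟩
          change q.1.1 ≤ p.1.2
          rw [Fin.le_def] at h1 h2 ⊢
          omega⟩)) (1 : R)
      else 0)
  | .inr (.inr p), .inr (.inl l) =>
      if p.1.2.val + 1 = l.val then Finsupp.single (.inr (.inl p.1.1)) (1 : R) else 0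
  | .inr (.inl l), .inr (.inr p) =>
      -(if p.1.2.val + 1 = l.val then Finsupp.single (.inr (.inl p.1.1)) (1 : R) else 0)
  | .inr (.inr p), .inl (l, m) =>
      (if p.1.2.val + 1 = m.val then Finsupp.single (.inl (l, p.1.1)) (1 : R) else 0)
      + (if p.1.2.val + 1 = l.val then Finsupp.single (.inl (p.1.1, m)) (1 : R) else 0)
  | .inl (l, m), .inr (.inr p) =>
      -((if p.1.2.val + 1 = m.val then Finsupp.single (.inl (l, p.1.1)) (1 : R) else 0)
        + (if p.1.2.val + 1 = l.val then Finsupp.single (.inl (p.1.1, m)) (1 : R) else 0))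
  | .inr (.inl i), .inr (.inl j) =>
      Finsupp.single (.inl (j, i)) (1 : R) - Finsupp.single (.inl (i, j)) (1 : R)
  | _, _ => 0

/-- The bilinear bracket on the free module on the indecomposables determined by
the structure constants of Proposition 4.2. -/
noncomputable def brkt {n : ℕ} {R : Type} [CommRing R] (x y : LIdx n →₀ R) :
    LIdx n →₀ R :=
  Finsupp.sum x fun a r => Finsupp.sum y fun b s => (r * s) • cst R a b

/-- Basis element U_{i,j}. -/
noncomputable def Ub {n : ℕ} (R : Type) [CommRing R] (i j : Fin n) : LIdx n →₀ R :=
  Finsupp.single (.inl (i, j)) 1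

/-- Basis element V_i. -/
noncomputable def Vb {n : ℕ} (R : Type) [CommRing R] (i : Fin n) : LIdx n →₀ R :=
  Finsupp.single (.inr (.inl i)) 1

/-- Basis element W_{i,j} (i ≤ j ≤ n-1, 0-indexed j+1 < n). -/
noncomputable def Wb {n : ℕ} (R : Type) [CommRing R] (i j : Fin n)
    (h : i ≤ j ∧ j.val + 1 < n) : LIdx n →₀ R :=
  Finsupp.single (.inr (.inr ⟨(i, j), h⟩)) 1

/-- The ring ℤ[1/2]. -/
abbrev ZHalf : Type := Localization.Away (2 : ℤ)

namespace Finsupp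

variable {α R : Type*} [CommRing R] (c : α → α → α →₀ R)

noncomputable def bracketₗ : (α →₀ R) →ₗ[R] (α →₀ R) →ₗ[R] α →₀ R :=
  linearCombination R fun a => linearCombination R (c a)

@[simp]
theorem bracketₗ_single_single (a b : α) (r s : R) :
    bracketₗ c (single a r) (single b s) = (r * s) • c a b := by
  simp [bracketₗ, mul_smul]

theorem bracketₗ_antisymm (hc : ∀ a b, c a b = -c b a) (x y : α →₀ R) :
    bracketₗ c x y = -bracketₗ c y x := by
  have h : bracketₗ c + (bracketₗ c).flip = 0 := by
    ext a b
    simp [hc a b]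
  exact eq_neg_of_add_eq_zero_left (LinearMap.congr_fun₂ h x y)

theorem bracketₗ_dite_left {P : Prop} [Decidable P] (x : P → α →₀ R) (z : α →₀ R) :
    bracketₗ c (if h : P then x h else 0) z = if h : P then bracketₗ c (x h) z else 0 := by
  split_ifs <;> simp

theorem bracketₗ_ite_left {P : Prop} [Decidable P] (x z : α →₀ R) :
    bracketₗ c (if P then x else 0) z = if P then bracketₗ c x z else 0 := by
  split_ifs <;> simp

noncomputable def jacobiator (x y z : α →₀ R) : α →₀ R :=
  bracketₗ c (bracketₗ c x y) z + bracketₗ c (bracketₗ c y z) x + bracketₗ c (bracketₗ c z x) y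

variable {c}

theorem jacobiator_cycle (x y z : α →₀ R) : jacobiator c x y z = jacobiator c y z x := by
  unfold jacobiator; abel

theorem jacobiator_add_left (x x' y z : α →₀ R) :
    jacobiator c (x + x') y z = jacobiator c x y z + jacobiator c x' y z := by
  simp only [jacobiator, map_add, LinearMap.add_apply]
  abel

theorem jacobiator_smul_left (r : R) (x y z : α →₀ R) :
    jacobiator c (r • x) y z = r • jacobiator c x y z := by
  simp only [jacobiator, map_smul, LinearMap.smul_apply, smul_add]

theorem jacobiator_eq_zero_of_single_left {y z : α →₀ R}
    (h : ∀ a, jacobiator c (single a 1) y z = 0) (x : α →₀ R) : jacobiator c x y z = 0 := by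
  induction x using Finsupp.induction_linear with
  | zero => simp [jacobiator]
  | add x x' hx hx' => rw [jacobiator_add_left, hx, hx', add_zero]
  | single a r => rw [← smul_single_one, jacobiator_smul_left, h, smul_zero]

/-- The Jacobiator is invariant under cyclic permutations, so linearity in the first argument
gives linearity in all three. -/
theorem jacobiator_eq_zero (h : ∀ a b d, jacobiator c (single a 1) (single b 1) (single d 1) = 0)
    (x y z : α →₀ R) : jacobiator c x y z = 0 := by
  have h₁ : ∀ a b z, jacobiator c (single a 1) (single b 1) z = 0 := fun a b z =>
    (jacobiator_cycle z _ _).symm.trans (jacobiator_eq_zero_of_single_left (fun d => h d a b) z)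
  have h₂ : ∀ a y z, jacobiator c (single a 1) y z = 0 := fun a y z =>
    (jacobiator_cycle _ _ _).trans (jacobiator_eq_zero_of_single_left
      (fun b => (jacobiator_cycle _ _ _).symm.trans (h₁ a b z)) y)
  exact jacobiator_eq_zero_of_single_left (fun a => h₂ a y z) x

end Finsupp

section
variable {n : ℕ} {R : Type} [CommRing R]

theorem brkt_eq_bracketₗ (x y : LIdx n →₀ R) : brkt x y = Finsupp.bracketₗ (cst R) x y := by
  simp only [brkt, Finsupp.sum, Finsupp.bracketₗ, Finsupp.linearCombination_apply, LinearMap.coe_sum,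
    LinearMap.coe_smul, Finset.sum_apply, Pi.smul_apply, Finset.smul_sum, smul_smul]

theorem cst_antisymm (a b : LIdx n) : cst R a b = -cst R b a := by
  rcases a with ⟨i, j⟩ | i | ⟨⟨i, j⟩, _⟩ <;> rcases b with ⟨l, m⟩ | l | ⟨⟨l, m⟩, _⟩ <;>
    simp only [cst, neg_sub, neg_neg, neg_zero]

theorem jacobiator_cst_single (a b c : LIdx n) :
    Finsupp.jacobiator (cst R) (.single a 1) (.single b 1) (.single c 1) = 0 := by
  rcases a with ⟨i, j⟩ | i | ⟨⟨i, j⟩, _⟩ <;> rcases b with ⟨l, m⟩ | l | ⟨⟨l, m⟩, _⟩ <;>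
    rcases c with ⟨u, v⟩ | u | ⟨⟨u, v⟩, _⟩ <;>
    simp only [Finsupp.jacobiator, cst, Finsupp.bracketₗ_single_single, one_mul, one_smul,
      LinearMap.map_sub₂, LinearMap.map_add₂, LinearMap.map_neg₂, LinearMap.map_zero₂,
      Finsupp.bracketₗ_dite_left, Finsupp.bracketₗ_ite_left] <;>
    (try split_ifs) <;>
    abel

end

theorem stmt_13_general (n : ℕ) :
    (∀ x y : LIdx n →₀ ZHalf, brkt x y = -brkt y x) ∧
    (∀ x y z : LIdx n →₀ ZHalf,
      brkt (brkt x y) z + brkt (brkt y z) x + brkt (brkt z x) y = 0) := by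
  simp only [brkt_eq_bracketₗ]
  exact ⟨Finsupp.bracketₗ_antisymm _ cst_antisymm,
    Finsupp.jacobiator_eq_zero jacobiator_cst_single⟩

/-- the bracket defined on the free ℤ[1/2]-module on the
indecomposables by the structure constants of Proposition 4.2 is antisymmetric
and satisfies the Jacobi identity, i.e. L(A)⊗ℤ[1/2] is a Lie algebra. -/
theorem stmt_13 (n : ℕ) (hn : 2 ≤ n) :
    (∀ x y : LIdx n →₀ ZHalf, brkt x y = -brkt y x) ∧
    (∀ x y z : LIdx n →₀ ZHalf,
      brkt (brkt x y) z + brkt (brkt y z) x + brkt (brkt z x) y = 0) :=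
  stmt_13_general n
end

section
/- The Lie algebra L(A)⊗ℤ[1/2] (with the bracket given by the structure constants of Proposition 4.2) is generated by the elements S_1 = W_{1,1}, ..., S_{n-1} = W_{n-1,n-1}, S_n = V_n, and S'_n = U_{n,n}. In particular, every basis element W_{i,j}, V_i, U_{i,j} lies in the Lie subalgebra generated by these n+1 elements; explicitly U_{j,n} = ([W_{j,n-1},U_{n,n}] − [V_j,V_n])/2 and U_{n,j} = ([W_{j,n-1},U_{n,n}] + [V_j,V_n])/2. -/
/-- The element 1/2 of ℤ[1/2]. -/
noncomputable def half : ZHalf := IsLocalization.Away.invSelf (S := ZHalf) (2 : ℤ)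

section Bracket

variable {n : ℕ} {R : Type} [CommRing R]

lemma brkt_single_one (a b : LIdx n) :
    brkt (Finsupp.single a (1 : R)) (Finsupp.single b 1) = cst R a b := by
  simp [brkt, Finsupp.sum_single_index]

lemma brkt_Wb_Wb {i j k l : Fin n} (h : i ≤ j ∧ j.val + 1 < n) (h' : k ≤ l ∧ l.val + 1 < n)
    (hil : i ≤ l ∧ l.val + 1 < n) (hjk : j.val + 1 = k.val) :
    brkt (Wb R i j h) (Wb R k l h') = Wb R i l hil := by
  rw [Wb, Wb, brkt_single_one]
  have hli : l.val + 1 ≠ i.val := by rw [Fin.le_def] at h h'; omega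
  simp only [cst, dif_pos hjk, dif_neg hli, sub_zero]
  rfl

lemma brkt_Wb_Vb {i j k : Fin n} (h : i ≤ j ∧ j.val + 1 < n) (hjk : j.val + 1 = k.val) :
    brkt (Wb R i j h) (Vb R k) = Vb R i := by
  rw [Wb, Vb, brkt_single_one]
  simp only [cst, if_pos hjk]
  rfl

lemma brkt_Wb_Ub {i j : Fin n} (h : i ≤ j ∧ j.val + 1 < n) (l m : Fin n) :
    brkt (Wb R i j h) (Ub R l m) =
      (if j.val + 1 = m.val then Ub R l i else 0) +
        (if j.val + 1 = l.val then Ub R i m else 0) := by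
  rw [Wb, Ub, brkt_single_one]
  rfl

lemma brkt_Vb_Vb (i j : Fin n) : brkt (Vb R i) (Vb R j) = Ub R j i - Ub R i j := by
  rw [Vb, Vb, brkt_single_one]
  rfl

variable {j k l : Fin n} (h : j ≤ k ∧ k.val + 1 < n)

lemma brkt_Wb_Ub_self (hkl : k.val + 1 = l.val) :
    brkt (Wb R j k h) (Ub R l l) = Ub R l j + Ub R j l := by
  rw [brkt_Wb_Ub, if_pos hkl, if_pos hkl]

lemma brkt_Wb_Ub_self_sub_brkt_Vb_Vb (hkl : k.val + 1 = l.val) :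
    brkt (Wb R j k h) (Ub R l l) - brkt (Vb R j) (Vb R l) = (2 : R) • Ub R j l := by
  rw [brkt_Wb_Ub_self h hkl, brkt_Vb_Vb, two_smul]
  abel

lemma brkt_Wb_Ub_self_add_brkt_Vb_Vb (hkl : k.val + 1 = l.val) :
    brkt (Wb R j k h) (Ub R l l) + brkt (Vb R j) (Vb R l) = (2 : R) • Ub R l j := by
  rw [brkt_Wb_Ub_self h hkl, brkt_Vb_Vb, two_smul]
  abel

end Bracket

section Generation

variable {n : ℕ} {R : Type} [CommRing R]

def IsBracketClosed (P : Submodule R (LIdx n →₀ R)) : Prop :=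
  ∀ x ∈ P, ∀ y ∈ P, brkt x y ∈ P

variable {P : Submodule R (LIdx n →₀ R)}

lemma Wb_mem (hP : IsBracketClosed P)
    (hW : ∀ (i : Fin n) (h : i.val + 1 < n), Wb R i i ⟨le_refl i, h⟩ ∈ P)
    (i j : Fin n) (h : i ≤ j ∧ j.val + 1 < n) : Wb R i j h ∈ P := by
  suffices key : ∀ d (i j : Fin n) (h : i ≤ j ∧ j.val + 1 < n), j.val = i.val + d →
      Wb R i j h ∈ P from key (j.val - i.val) i j h (by rw [Fin.le_def] at h; omega)
  intro d
  induction d with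
  | zero =>
    intro i j h hd
    obtain rfl : i = j := Fin.ext hd.symm
    exact hW i h.2
  | succ d ih =>
    intro i j h hd
    have hi : i.val + 1 < n := by omega
    have hsucc : (⟨i.val + 1, hi⟩ : Fin n) ≤ j ∧ j.val + 1 < n :=
      ⟨by rw [Fin.le_def]; simp only; omega, h.2⟩
    rw [← brkt_Wb_Wb ⟨le_refl i, hi⟩ hsucc h rfl]
    exact hP _ (hW i hi) _ (ih _ j hsucc (by simp only; omega))

lemma exists_penultimate {l i : Fin n} (hl : l.val + 1 = n) (hil : i ≠ l) :
    ∃ k : Fin n, i ≤ k ∧ k.val + 1 < n ∧ k.val + 1 = l.val := by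
  have := Fin.val_ne_of_ne hil
  exact ⟨⟨l.val - 1, by omega⟩, by rw [Fin.le_def]; simp only; omega, by simp only; omega,
    by simp only; omega⟩

lemma Vb_mem (hP : IsBracketClosed P)
    (hW : ∀ (i : Fin n) (h : i.val + 1 < n), Wb R i i ⟨le_refl i, h⟩ ∈ P)
    {l : Fin n} (hl : l.val + 1 = n) (hV : Vb R l ∈ P) (i : Fin n) : Vb R i ∈ P := by
  rcases eq_or_ne i l with rfl | hil
  · exact hV
  obtain ⟨k, hik, hk, hkl⟩ := exists_penultimate hl hil
  rw [← brkt_Wb_Vb ⟨hik, hk⟩ hkl]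
  exact hP _ (Wb_mem hP hW _ _ ⟨hik, hk⟩) _ hV

lemma Ub_mem_of_last (h2 : IsUnit (2 : R)) (hP : IsBracketClosed P)
    (hW : ∀ (i : Fin n) (h : i.val + 1 < n), Wb R i i ⟨le_refl i, h⟩ ∈ P)
    {l : Fin n} (hl : l.val + 1 = n) (hV : Vb R l ∈ P) (hU : Ub R l l ∈ P) (i : Fin n) :
    Ub R i l ∈ P ∧ Ub R l i ∈ P := by
  rcases eq_or_ne i l with rfl | hil
  · exact ⟨hU, hU⟩
  obtain ⟨k, hik, hk, hkl⟩ := exists_penultimate hl hil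
  have hWU := hP _ (Wb_mem hP hW _ _ ⟨hik, hk⟩) _ hU
  have hVV := hP _ (Vb_mem hP hW hl hV i) _ hV
  constructor
  · rw [← Submodule.smul_mem_iff_of_isUnit P h2, ← brkt_Wb_Ub_self_sub_brkt_Vb_Vb ⟨hik, hk⟩ hkl]
    exact P.sub_mem hWU hVV
  · rw [← Submodule.smul_mem_iff_of_isUnit P h2, ← brkt_Wb_Ub_self_add_brkt_Vb_Vb ⟨hik, hk⟩ hkl]
    exact P.add_mem hWU hVV

lemma Ub_mem (h2 : IsUnit (2 : R)) (hP : IsBracketClosed P)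
    (hW : ∀ (i : Fin n) (h : i.val + 1 < n), Wb R i i ⟨le_refl i, h⟩ ∈ P)
    {l : Fin n} (hl : l.val + 1 = n) (hV : Vb R l ∈ P) (hU : Ub R l l ∈ P) (i j : Fin n) :
    Ub R i j ∈ P := by
  have hlast := Ub_mem_of_last h2 hP hW hl hV hU
  rcases eq_or_ne j l with rfl | hjl
  · exact (hlast i).1
  rcases eq_or_ne i l with rfl | hil
  · exact (hlast j).2
  obtain ⟨k, hjk, hk, hkl⟩ := exists_penultimate hl hjl
  have hki : k.val + 1 ≠ i.val := fun h => hil (Fin.ext (by omega))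
  have hb := hP _ (Wb_mem hP hW _ _ ⟨hjk, hk⟩) _ (hlast i).1
  rwa [brkt_Wb_Ub, if_pos hkl, if_neg hki, add_zero] at hb

lemma mem_of_forall_single_one_mem {ι : Type*} {M : Submodule R (ι →₀ R)}
    (h : ∀ a, Finsupp.single a 1 ∈ M) (m : ι →₀ R) : m ∈ M := by
  have htop : (⊤ : Submodule R (ι →₀ R)) ≤ M := by
    rw [← (Finsupp.basisSingleOne : Module.Basis ι R _).span_eq, Submodule.span_le,
      Finsupp.coe_basisSingleOne]
    rintro _ ⟨a, rfl⟩
    exact h a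
  exact htop Submodule.mem_top

theorem mem_of_generators (h2 : IsUnit (2 : R)) (hP : IsBracketClosed P)
    (hW : ∀ (i : Fin n) (h : i.val + 1 < n), Wb R i i ⟨le_refl i, h⟩ ∈ P)
    {l : Fin n} (hl : l.val + 1 = n) (hV : Vb R l ∈ P) (hU : Ub R l l ∈ P)
    (m : LIdx n →₀ R) : m ∈ P := by
  refine mem_of_forall_single_one_mem (fun a => ?_) m
  match a with
  | .inl (i, j) => exact Ub_mem h2 hP hW hl hV hU i j
  | .inr (.inl i) => exact Vb_mem hP hW hl hV i
  | .inr (.inr ⟨(i, j), h⟩) => exact Wb_mem hP hW i j h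

end Generation

lemma two_mul_half : (2 : ZHalf) * half = 1 := by
  simpa [half] using IsLocalization.Away.mul_invSelf (S := ZHalf) (2 : ℤ)

lemma half_smul_two_smul {M : Type*} [AddCommGroup M] [Module ZHalf M] (x : M) :
    half • ((2 : ZHalf) • x) = x := by
  rw [smul_smul, mul_comm, two_mul_half, one_smul]

/-- L(A)⊗ℤ[1/2] is generated as a Lie algebra by
S_1 = W_{1,1}, …, S_{n-1} = W_{n-1,n-1}, S_n = V_n and S'_n = U_{n,n}; in
particular U_{j,n} = ([W_{j,n-1},U_{n,n}] − [V_j,V_n])/2 and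
U_{n,j} = ([W_{j,n-1},U_{n,n}] + [V_j,V_n])/2. -/
theorem stmt_14 (n : ℕ) (hn : 2 ≤ n) :
    (∀ P : Submodule ZHalf (LIdx n →₀ ZHalf),
      (∀ (i : Fin n) (h : i.val + 1 < n), Wb ZHalf i i ⟨le_refl i, h⟩ ∈ P) →
      Vb ZHalf ⟨n - 1, by omega⟩ ∈ P →
      Ub ZHalf ⟨n - 1, by omega⟩ ⟨n - 1, by omega⟩ ∈ P →
      (∀ x ∈ P, ∀ y ∈ P, brkt x y ∈ P) →
      ∀ m : LIdx n →₀ ZHalf, m ∈ P) ∧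
    (∀ (j : Fin n) (hj : j.val + 1 < n),
      Ub ZHalf j ⟨n - 1, by omega⟩ =
        half • (brkt
            (Wb ZHalf j ⟨n - 2, by omega⟩
              ⟨by rw [Fin.le_def]; show j.val ≤ n - 2; omega, by show n - 2 + 1 < n; omega⟩)
            (Ub ZHalf ⟨n - 1, by omega⟩ ⟨n - 1, by omega⟩) -
          brkt (Vb ZHalf j) (Vb ZHalf ⟨n - 1, by omega⟩)) ∧
      Ub ZHalf ⟨n - 1, by omega⟩ j =
        half • (brkt
            (Wb ZHalf j ⟨n - 2, by omega⟩
              ⟨by rw [Fin.le_def]; show j.val ≤ n - 2; omega, by show n - 2 + 1 < n; omega⟩)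
            (Ub ZHalf ⟨n - 1, by omega⟩ ⟨n - 1, by omega⟩) +
          brkt (Vb ZHalf j) (Vb ZHalf ⟨n - 1, by omega⟩))) := by
  have hlast : (⟨n - 1, by omega⟩ : Fin n).val + 1 = n := by simp only; omega
  have hpen : (⟨n - 2, by omega⟩ : Fin n).val + 1 = (⟨n - 1, by omega⟩ : Fin n).val := by
    simp only; omega
  refine ⟨fun P hW hV hU hP => ?_, fun j hj => ⟨?_, ?_⟩⟩
  · have h2 : IsUnit (2 : ZHalf) := IsUnit.of_mul_eq_one _ two_mul_half
    exact mem_of_generators h2 hP hW hlast hV hU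
  · rw [brkt_Wb_Ub_self_sub_brkt_Vb_Vb _ hpen]
    exact (half_smul_two_smul (M := LIdx n →₀ ZHalf) _).symm
  · rw [brkt_Wb_Ub_self_add_brkt_Vb_Vb _ hpen]
    exact (half_smul_two_smul (M := LIdx n →₀ ZHalf) _).symm
end

section
/- In the Lie algebra L(A)⊗ℂ with the bracket of Proposition 4.2, the subspace spanned by the elements U_{i,j} + U_{j,i} for 1≤i≤j≤n is a Lie ideal. -/
/-! The bracket is bilinear, so it suffices to bracket basis vectors with the generators
`U_{i,j} + U_{j,i}`. Brackets of `U` with `U` or `V` vanish, and `W_{k,l}` acts on `U_{i,j}` index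
by index, like a derivation on `ℂⁿ ⊗ ℂⁿ`; such an action preserves symmetric tensors.
Brackets in the other order follow from `[U, a] = -[a, U]`. -/

theorem Submodule.apply_mem_of_forall_mem_span {R M N P : Type*} [CommSemiring R]
    [AddCommMonoid M] [AddCommMonoid N] [AddCommMonoid P] [Module R M] [Module R N] [Module R P]
    {f : M →ₗ[R] N →ₗ[R] P} {s : Set M} {t : Set N} {p : Submodule R P}
    (h : ∀ a ∈ s, ∀ b ∈ t, f a b ∈ p) {x : M} {y : N} (hx : x ∈ span R s)
    (hy : y ∈ span R t) : f x y ∈ p := by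
  refine map₂_le.1 ?_ x hx y hy
  rw [map₂_span_span, span_le]
  rintro _ ⟨a, ha, b, hb, rfl⟩
  exact h a ha b hb

variable {R : Type} [CommRing R] {n : ℕ}

noncomputable def brktBilin :
    (LIdx n →₀ R) →ₗ[R] (LIdx n →₀ R) →ₗ[R] (LIdx n →₀ R) :=
  Finsupp.linearCombination R fun a => Finsupp.linearCombination R (cst R a)

theorem brkt_eq_brktBilin (x y : LIdx n →₀ R) : brkt x y = brktBilin x y := by
  simp [brkt, brktBilin, Finsupp.linearCombination_apply, Finsupp.smul_sum, mul_smul]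

variable (R) in
noncomputable def symU (i j : Fin n) : LIdx n →₀ R := Ub R i j + Ub R j i

theorem symU_comm (i j : Fin n) : symU R i j = symU R j i := add_comm _ _

variable (R n) in
noncomputable def symUSpan : Submodule R (LIdx n →₀ R) :=
  Submodule.span R {m | ∃ i j : Fin n, i ≤ j ∧ m = Ub R i j + Ub R j i}

theorem symU_mem_symUSpan (i j : Fin n) : symU R i j ∈ symUSpan R n := by
  rcases le_total i j with h | h
  · exact Submodule.subset_span ⟨i, j, h, rfl⟩
  · rw [symU_comm]
    exact Submodule.subset_span ⟨j, i, h, rfl⟩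

theorem cst_inl_left (i j : Fin n) (a : LIdx n) :
    cst R (.inl (i, j)) a = -cst R a (.inl (i, j)) := by
  rcases a with ⟨l, m⟩ | l | p <;> simp [cst]

theorem cst_W_add_cst_W_swap (p : {p : Fin n × Fin n // p.1 ≤ p.2 ∧ p.2.val + 1 < n})
    (i j : Fin n) :
    cst R (.inr (.inr p)) (.inl (i, j)) + cst R (.inr (.inr p)) (.inl (j, i)) =
      (if p.1.2.val + 1 = j.val then symU R i p.1.1 else 0) +
        (if p.1.2.val + 1 = i.val then symU R p.1.1 j else 0) := by
  simp only [cst, symU, Ub]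
  split_ifs <;> abel

theorem cst_add_cst_swap_mem_symUSpan (a : LIdx n) (i j : Fin n) :
    cst R a (.inl (i, j)) + cst R a (.inl (j, i)) ∈ symUSpan R n := by
  rcases a with ⟨l, m⟩ | l | p
  · simp [cst]
  · simp [cst]
  · rw [cst_W_add_cst_W_swap]
    refine Submodule.add_mem _ ?_ ?_ <;> split_ifs <;>
      simp only [symU_mem_symUSpan, Submodule.zero_mem]

theorem brkt_single_symU (a : LIdx n) (i j : Fin n) :
    brkt (Finsupp.single a 1) (symU R i j) = cst R a (.inl (i, j)) + cst R a (.inl (j, i)) := by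
  simp [brkt_eq_brktBilin, brktBilin, symU, Ub]

theorem brkt_symU_single (a : LIdx n) (i j : Fin n) :
    brkt (symU R i j) (Finsupp.single a 1) =
      -(cst R a (.inl (i, j)) + cst R a (.inl (j, i))) := by
  simp [brkt_eq_brktBilin, brktBilin, symU, Ub, cst_inl_left, add_comm]

theorem brkt_mem_symUSpan {x y : LIdx n →₀ R} (hy : y ∈ symUSpan R n) :
    brkt x y ∈ symUSpan R n ∧ brkt y x ∈ symUSpan R n := by
  have hx : x ∈ Submodule.span R (Set.range Finsupp.basisSingleOne) := by
    rw [Finsupp.basisSingleOne.span_eq]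
    exact Submodule.mem_top
  rw [brkt_eq_brktBilin, brkt_eq_brktBilin]
  constructor
  · refine Submodule.apply_mem_of_forall_mem_span ?_ hx hy
    rintro _ ⟨a, rfl⟩ _ ⟨i, j, -, rfl⟩
    rw [Finsupp.coe_basisSingleOne, ← brkt_eq_brktBilin, ← symU, brkt_single_symU]
    exact cst_add_cst_swap_mem_symUSpan a i j
  · refine Submodule.apply_mem_of_forall_mem_span (f := brktBilin.flip) ?_ hx hy
    rintro _ ⟨a, rfl⟩ _ ⟨i, j, -, rfl⟩
    rw [LinearMap.flip_apply, Finsupp.coe_basisSingleOne, ← brkt_eq_brktBilin, ← symU,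
      brkt_symU_single]
    exact Submodule.neg_mem _ (cst_add_cst_swap_mem_symUSpan a i j)

/-- in L(A)⊗ℂ, the subspace spanned by the elements
U_{i,j} + U_{j,i} (1≤i≤j≤n) is a Lie ideal. -/
theorem stmt_15 (n : ℕ) :
    ∀ x : LIdx n →₀ ℂ,
      ∀ y ∈ Submodule.span ℂ
          {m : LIdx n →₀ ℂ | ∃ i j : Fin n, i ≤ j ∧ m = Ub ℂ i j + Ub ℂ j i},
        brkt x y ∈ Submodule.span ℂ
          {m : LIdx n →₀ ℂ | ∃ i j : Fin n, i ≤ j ∧ m = Ub ℂ i j + Ub ℂ j i} ∧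
        brkt y x ∈ Submodule.span ℂ
          {m : LIdx n →₀ ℂ | ∃ i j : Fin n, i ≤ j ∧ m = Ub ℂ i j + Ub ℂ j i} :=
  fun _ _ hy => brkt_mem_symUSpan hy
end
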